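/- arXiv:1902.02408 — 2 statements merged into one kernel-verified Lean document; each statement's English description precedes it below -/
import Mathlib

section
/- Let μ be a probability measure on ℝ^p absolutely continuous with respect to Lebesgue measure. Let 𝒜 be the set of points x ∈ ℝ^p such that there exists x' ≠ x with μ(B(x', ‖x' − x‖)) = 0, where B(y, r) denotes the closed ball of radius r centered at y. Then μ(𝒜) = 0. -/
open MeasureTheory Metric
open Filter Set

theorem stmt0 {p : ℕ} (μ : Measure (EuclideanSpace ℝ (Fin p)))
    [IsProbabilityMeasure μ] (hμ : μ ≪ volume) :
    μ {x | ∃ x' ≠ x, μ (closedBall x' (dist x' x)) = 0} = 0 := by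
  set A := {x : EuclideanSpace ℝ (Fin p) | ∃ x' ≠ x, μ (closedBall x' (dist x' x)) = 0} with hA
  set f := μ.rnDeriv volume with hf
  have hfm : Measurable f := μ.measurable_rnDeriv volume
  set S := {x | f x ≠ 0} with hS
  have hSm : MeasurableSet S := (hfm (measurableSet_singleton 0)).compl
  have hμd : volume.withDensity f = μ := Measure.withDensity_rnDeriv_eq μ volume hμ
  -- μ Sᶜ = 0
  have hSc : μ Sᶜ = 0 := by
    rw [← hμd, withDensity_apply _ hSm.compl]
    rw [setLIntegral_congr_fun hSm.compl (fun x hx => by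
      simpa [hS] using hx), lintegral_zero]
  -- the constant c = (1/2)^p
  set c : ENNReal := ENNReal.ofReal ((1/2 : ℝ) ^ p) with hc
  have hc0 : c ≠ 0 := by
    simp only [hc, ne_eq, ENNReal.ofReal_eq_zero, not_le]
    positivity
  have hlt : 1 - c < 1 := ENNReal.sub_lt_self ENNReal.one_ne_top one_ne_zero hc0
  -- For x ∈ A ∩ S, density fails
  have key : ∀ x ∈ A, ¬ Tendsto
      (fun r => volume (S ∩ closedBall x r) / volume (closedBall x r))
      (nhdsWithin 0 (Set.Ioi 0)) (nhds 1) := by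
    rintro x ⟨x', hx'ne, hx'0⟩ htend
    set r : ℝ := dist x' x with hr
    have hrpos : 0 < r := dist_pos.mpr hx'ne
    -- f = 0 a.e. on the closed ball
    have hball : volume (S ∩ closedBall x' r) = 0 := by
      have h0 : ∫⁻ y in closedBall x' r, f y = 0 := by
        rw [← withDensity_apply _ measurableSet_closedBall, hμd]; exact hx'0
      have := (lintegral_eq_zero_iff hfm).mp h0
      have h2 : (volume.restrict (closedBall x' r)) S = 0 := by
        rw [Filter.EventuallyEq] at this
        have : ∀ᵐ y ∂(volume.restrict (closedBall x' r)), y ∉ S := by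
          filter_upwards [this] with y hy
          simp [hS, hy]
        simpa [ae_iff] using this
      rwa [Measure.restrict_apply hSm] at h2
    -- the ratio bound for small ε
    have bound : ∀ ε : ℝ, 0 < ε → ε ≤ 2 * r →
        volume (S ∩ closedBall x ε) / volume (closedBall x ε) ≤ 1 - c := by
      intro ε hε hε2
      set u : EuclideanSpace ℝ (Fin p) := ‖x' - x‖⁻¹ • (x' - x) with hu
      have hxx : x' - x ≠ 0 := sub_ne_zero.mpr hx'ne
      have hnu : ‖u‖ = 1 := by
        rw [hu, norm_smul, norm_inv, norm_norm, inv_mul_cancel₀ (norm_ne_zero_iff.mpr hxx)]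
      set m : EuclideanSpace ℝ (Fin p) := x + (ε/2) • u with hm
      have hrnorm : r = ‖x' - x‖ := by rw [hr, dist_eq_norm]
      have hdmx : dist m x = ε / 2 := by
        rw [hm, dist_eq_norm, add_sub_cancel_left, norm_smul, hnu, mul_one,
          Real.norm_eq_abs, abs_of_pos (by linarith : (0:ℝ) < ε/2)]
      have hdmx' : dist m x' = r - ε / 2 := by
        have hxu : x' - x = r • u := by
          rw [hu, smul_smul, hrnorm, mul_inv_cancel₀ (norm_ne_zero_iff.mpr hxx), one_smul]
        rw [hm, dist_eq_norm]
        have : x + (ε/2) • u - x' = ((ε/2) - r) • u := by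
          rw [sub_smul, ← hxu]; abel
        rw [this, norm_smul, hnu, mul_one, Real.norm_eq_abs, abs_of_nonpos (by linarith)]
        ring
      have hsub1 : closedBall m (ε/2) ⊆ closedBall x' r := fun y hy => by
        simp only [mem_closedBall] at *
        calc dist y x' ≤ dist y m + dist m x' := dist_triangle _ _ _
          _ ≤ ε/2 + (r - ε/2) := add_le_add hy (le_of_eq hdmx')
          _ = r := by ring
      have hsub2 : closedBall m (ε/2) ⊆ closedBall x ε := fun y hy => by
        simp only [mem_closedBall] at *
        calc dist y x ≤ dist y m + dist m x := dist_triangle _ _ _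
          _ ≤ ε/2 + ε/2 := add_le_add hy (le_of_eq hdmx)
          _ = ε := by ring
      set V := volume (closedBall x ε) with hV
      set W := volume (closedBall m (ε/2)) with hW
      have hV0 : V ≠ 0 := (measure_closedBall_pos volume x hε).ne'
      have hVtop : V ≠ ⊤ := measure_closedBall_lt_top.ne
      have hWV : W = c * V := by
        rw [hW, hV, Measure.addHaar_closedBall _ _ (by linarith : (0:ℝ) ≤ ε/2),
          Measure.addHaar_closedBall _ _ hε.le, finrank_euclideanSpace_fin]
        rw [← mul_assoc, hc, ← ENNReal.ofReal_mul (by positivity), ← mul_pow]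
        ring_nf
      have hmain : volume (S ∩ closedBall x ε) ≤ V - W := by
        have hsubset : S ∩ closedBall x ε ⊆
            (closedBall x ε \ closedBall m (ε/2)) ∪ (S ∩ closedBall x' r) := by
          rintro y ⟨hyS, hyB⟩
          by_cases hym : y ∈ closedBall m (ε/2)
          · exact Or.inr ⟨hyS, hsub1 hym⟩
          · exact Or.inl ⟨hyB, hym⟩
        calc volume (S ∩ closedBall x ε)
            ≤ volume ((closedBall x ε \ closedBall m (ε/2)) ∪ (S ∩ closedBall x' r)) :=
              measure_mono hsubset
          _ ≤ volume (closedBall x ε \ closedBall m (ε/2)) + volume (S ∩ closedBall x' r) :=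
              measure_union_le _ _
          _ = volume (closedBall x ε \ closedBall m (ε/2)) := by rw [hball, add_zero]
          _ = V - W := measure_diff hsub2 measurableSet_closedBall.nullMeasurableSet
              measure_closedBall_lt_top.ne
      calc volume (S ∩ closedBall x ε) / V ≤ (V - W) / V :=
            ENNReal.div_le_div_right hmain _
        _ = ((1 - c) * V) / V := by
            rw [ENNReal.sub_mul (fun _ _ => hVtop), one_mul, hWV]
        _ = (1 - c) * (V / V) := by rw [mul_div_assoc]
        _ = 1 - c := by rw [ENNReal.div_self hV0 hVtop, mul_one]
    -- contradiction with the tendsto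
    have h1 : ∀ᶠ ε in nhdsWithin (0:ℝ) (Set.Ioi 0),
        1 - c < volume (S ∩ closedBall x ε) / volume (closedBall x ε) :=
      htend.eventually (eventually_gt_nhds hlt)
    have h2 : ∀ᶠ ε in nhdsWithin (0:ℝ) (Set.Ioi 0), ε ∈ Set.Ioc 0 (2*r) :=
      eventually_of_mem (Ioc_mem_nhdsGT_of_mem ⟨le_refl 0, by linarith⟩) (fun _ h => h)
    obtain ⟨ε, hε1, hε2⟩ := (h1.and h2).exists
    exact absurd (bound ε hε2.1 hε2.2) (not_le.mpr hε1)
  -- Besicovitch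
  have hdens := Besicovitch.ae_tendsto_measure_inter_div_of_measurableSet
    (volume : Measure (EuclideanSpace ℝ (Fin p))) hSm
  have hvolAS : volume (A ∩ S) = 0 := by
    have : A ∩ S ⊆ {x | ¬ Tendsto
        (fun r => volume (S ∩ closedBall x r) / volume (closedBall x r))
        (nhdsWithin 0 (Set.Ioi 0)) (nhds (S.indicator 1 x))} := by
      rintro x ⟨hxA, hxS⟩
      have hind : S.indicator (1 : EuclideanSpace ℝ (Fin p) → ENNReal) x = 1 := by
        simp [Set.indicator_of_mem hxS]
      rw [Set.mem_setOf_eq, hind]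
      exact key x hxA
    exact measure_mono_null this (by simpa [ae_iff] using hdens)
  have hμAS : μ (A ∩ S) = 0 := hμ hvolAS
  have hle : μ A ≤ 0 := calc
    μ A ≤ μ ((A ∩ S) ∪ Sᶜ) := measure_mono (fun x hx => by
        by_cases h : x ∈ S
        · exact Or.inl ⟨hx, h⟩
        · exact Or.inr h)
    _ ≤ μ (A ∩ S) + μ Sᶜ := measure_union_le _ _
    _ = 0 := by rw [hμAS, hSc, add_zero]
  exact le_antisymm hle zero_le
end

section
/- Let μ be a probability measure on ℝ^p absolutely continuous with respect to Lebesgue measure, and let x be a point such that μ(B(x', ‖x' − x‖)) > 0 for all x' ≠ x. Then for every δ > 0 there exists η > 0 such that for all x' ≠ x, if μ(B(x', ‖x − x'‖)) ≤ η then ‖x − x'‖ < δ. -/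
open MeasureTheory Metric

lemma aux_exists_closedBall {E : Type*} [MetricSpace E] [MeasurableSpace E]
    (μ : Measure E) {w : E} {a : ℝ} (ha : 0 < a) (h : 0 < μ (ball w a)) :
    ∃ r : ℝ, 0 < r ∧ r < a ∧ 0 < μ (closedBall w r) := by
  by_contra hcon
  push_neg at hcon
  have hz : ∀ r : ℝ, r < a → μ (closedBall w r) = 0 := by
    intro r hr
    have h2 : μ (closedBall w (max r (a/2))) ≤ 0 :=
      hcon _ (lt_of_lt_of_le (by linarith) (le_max_right _ _)) (max_lt hr (by linarith))
    exact le_antisymm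
      ((measure_mono (closedBall_subset_closedBall (le_max_left _ _))).trans h2) bot_le
  have hsub : ball w a ⊆ ⋃ n : ℕ, closedBall w (a - a / (n + 2)) := by
    intro y hy
    rw [mem_ball] at hy
    obtain ⟨n, hn⟩ := exists_nat_gt (a / (a - dist y w))
    refine Set.mem_iUnion.2 ⟨n, ?_⟩
    rw [mem_closedBall]
    have hpos : 0 < a - dist y w := by linarith
    have h2 : a / ((n : ℝ) + 2) < a - dist y w := by
      rw [div_lt_iff₀ (by positivity)]
      have h3 : a < (n : ℝ) * (a - dist y w) := (div_lt_iff₀ hpos).1 hn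
      nlinarith
    linarith
  have : μ (ball w a) = 0 := by
    refine le_antisymm ((measure_mono hsub).trans_eq ?_) bot_le
    refine measure_iUnion_null fun n => hz _ ?_
    have : 0 < a / ((n : ℝ) + 2) := by positivity
    linarith
  exact absurd this h.ne'

theorem stmt1 {p : ℕ} (μ : Measure (EuclideanSpace ℝ (Fin p)))
    [IsProbabilityMeasure μ] (hμ : μ ≪ volume)
    (x : EuclideanSpace ℝ (Fin p))
    (hx : ∀ x' ≠ x, 0 < μ (closedBall x' (dist x' x))) :
    ∀ δ > (0 : ℝ), ∃ η > (0 : ENNReal), ∀ x' ≠ x,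
      μ (closedBall x' (dist x x')) ≤ η → dist x x' < δ := by
  intro δ hδ
  rcases Nat.eq_zero_or_pos p with hp | hp
  · subst hp
    haveI : Subsingleton (EuclideanSpace ℝ (Fin 0)) :=
      ⟨fun a b => PiLp.ext fun i => Fin.elim0 i⟩
    exact ⟨1, one_pos, fun x' hx' _ => absurd (Subsingleton.elim x' x) hx'⟩
  haveI : Nontrivial (EuclideanSpace ℝ (Fin p)) :=
    Module.nontrivial_of_finrank_pos (R := ℝ) (by simpa using hp)
  by_contra hcon
  push_neg at hcon
  choose X hne hμle hfar using fun n : ℕ =>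
    hcon ((n : ENNReal) + 1)⁻¹ (ENNReal.inv_pos.2 (by simp))
  have hXnz : ∀ n, X n - x ≠ 0 := fun n => sub_ne_zero.2 (hne n)
  set un : ℕ → EuclideanSpace ℝ (Fin p) := fun n => ‖X n - x‖⁻¹ • (X n - x) with hun
  have hmem : ∀ n, un n ∈ sphere (0 : EuclideanSpace ℝ (Fin p)) 1 := fun n => by
    rw [mem_sphere_zero_iff_norm]
    simp [un, norm_smul, inv_mul_cancel₀ (norm_ne_zero_iff.2 (hXnz n))]
  obtain ⟨u, humem, φ, hφ, hconv⟩ :=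
    (isCompact_sphere (0 : EuclideanSpace ℝ (Fin p)) 1).tendsto_subseq hmem
  have hu1 : ‖u‖ = 1 := mem_sphere_zero_iff_norm.1 humem
  set w : EuclideanSpace ℝ (Fin p) := x + (δ/4) • u with hw
  have hwx : dist w x = δ/4 := by
    rw [dist_eq_norm]
    simp [hw, norm_smul, hu1, abs_of_pos (show (0:ℝ) < δ/4 by linarith)]
    exact hδ.le
  have hwne : w ≠ x := by
    intro h; rw [h, dist_self] at hwx; linarith
  have hposc : 0 < μ (closedBall w (δ/4)) := by
    have := hx w hwne; rwa [hwx] at this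
  have hsph0 : μ (sphere w (δ/4)) = 0 := hμ (Measure.addHaar_sphere volume w _)
  have hposb : 0 < μ (ball w (δ/4)) := by
    by_contra hb
    push_neg at hb
    have hle : μ (closedBall w (δ/4)) ≤ μ (ball w (δ/4)) + μ (sphere w (δ/4)) := by
      rw [← ball_union_sphere]; exact measure_union_le _ _
    rw [hsph0, le_zero_iff.1 hb, zero_add] at hle
    exact absurd (le_antisymm hle bot_le) hposc.ne'
  obtain ⟨r, hr0, hrlt, hrpos⟩ := aux_exists_closedBall μ (by linarith) hposb
  obtain ⟨m, hm⟩ := ENNReal.exists_inv_nat_lt hrpos.ne'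
  have hc : (0:ℝ) < (δ/4 - r) / (δ/4) := by
    have : (0:ℝ) < δ/4 - r := by linarith
    positivity
  obtain ⟨N, hN⟩ := (Metric.tendsto_atTop.1 hconv) _ hc
  set k := φ (max N m) with hk
  have hdk : dist (un k) u < (δ/4 - r)/(δ/4) := hN _ (le_max_left _ _)
  set R := dist x (X k) with hR
  have hRδ : δ ≤ R := hfar k
  have hXk : X k - x = R • un k := by
    rw [hR, dist_eq_norm, norm_sub_rev]
    exact (smul_inv_smul₀ (norm_ne_zero_iff.2 (hXnz k)) _).symm
  have hkey : closedBall w r ⊆ closedBall (X k) R := by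
    intro y hy
    rw [mem_closedBall] at hy ⊢
    have hdw : dist w (X k) ≤ (δ/4) * dist (un k) u + (R - δ/4) := by
      have heq : w - X k = (δ/4) • (u - un k) + ((δ/4) - R) • un k := by
        rw [hw]
        have : X k = x + R • un k := by rw [← hXk]; abel
        rw [this]; module
      rw [dist_eq_norm, heq]
      have h1 : ‖un k‖ = 1 := mem_sphere_zero_iff_norm.1 (hmem k)
      have h2 : ‖u - un k‖ = dist (un k) u := by
        rw [dist_eq_norm, norm_sub_rev]
      calc ‖(δ/4) • (u - un k) + ((δ/4) - R) • un k‖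
          ≤ ‖(δ/4) • (u - un k)‖ + ‖((δ/4) - R) • un k‖ := norm_add_le _ _
        _ = |δ/4| * ‖u - un k‖ + |δ/4 - R| * ‖un k‖ := by
            rw [norm_smul, norm_smul, Real.norm_eq_abs, Real.norm_eq_abs]
        _ = (δ/4) * dist (un k) u + (R - δ/4) := by
            rw [h1, h2, abs_of_pos (show (0:ℝ) < δ/4 by linarith),
              abs_of_nonpos (by linarith), mul_one]
            ring
    have hsmall : (δ/4) * dist (un k) u < δ/4 - r := by
      have := (lt_div_iff₀ (show (0:ℝ) < δ/4 by linarith)).1 hdk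
      linarith [mul_comm (δ/4) (dist (un k) u)]
    calc dist y (X k) ≤ dist y w + dist w (X k) := dist_triangle _ _ _
      _ ≤ r + ((δ/4) * dist (un k) u + (R - δ/4)) := add_le_add hy hdw
      _ ≤ R := by linarith
  have hchain : μ (closedBall w r) ≤ (m : ENNReal)⁻¹ := by
    calc μ (closedBall w r) ≤ μ (closedBall (X k) R) := measure_mono hkey
      _ ≤ ((k : ENNReal) + 1)⁻¹ := hμle k
      _ ≤ (m : ENNReal)⁻¹ := by
          apply ENNReal.inv_le_inv.2
          have : m ≤ k + 1 := le_trans (le_max_right N m) (le_trans hφ.le_apply (Nat.le_succ _))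
          exact_mod_cast this
  exact lt_irrefl _ (hchain.trans_lt hm)
end
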